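/- Let σ be an a-state, δ a p-state, and c = a_1;…;a_n (n ≥ 1) a sequence of non-sensing actions that is regressable with respect to (σ,δ). Then Regress(a_n,δ) = δ* for some p-state δ* ≠ ⊥, and the sequence a_1;…;a_{n-1} is regressable with respect to (σ,δ*). -/

import Mathlib

open scoped Classical

/-! ## States -/

/-- A state: a pair of finite sets of fluents (true ones and false ones).
Used for both a-states (when the two sets are disjoint, see `St.OK`) and
p-states (partial states). -/
structure St (V : Type*) where
  T : Finset V
  F : Finset V
deriving DecidableEq

variable {V : Type*} [DecidableEq V]

/-- A pair of sets of fluents is a genuine (a- or p-) state when the sets are disjoint. -/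
def St.OK (s : St V) : Prop := Disjoint s.T s.F

/-- The extension set `ext(δ)` of a p-state `δ`: all a-states extending it. -/
def exts (δ : St V) : Set (St V) := {σ | σ.OK ∧ δ.T ⊆ σ.T ∧ δ.F ⊆ σ.F}

/-- `δ'` is a partial extension of `δ`. -/
def pext (δ δ' : St V) : Prop := δ.T ⊆ δ'.T ∧ δ.F ⊆ δ'.F

/-! ## Actions -/

/-- A non-sensing action: precondition literals (positive part `preP`, negative part
`preN`), and disjoint add and delete lists. -/
structure NAct (V : Type*) where
  preP : Finset V
  preN : Finset V
  add : Finset V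
  del : Finset V
  hdisj : Disjoint add del

/-- A sensing action: precondition literals and a set of sensed fluents not occurring
in the precondition. -/
structure SAct (V : Type*) where
  preP : Finset V
  preN : Finset V
  sens : Finset V
  hsens : Disjoint sens (preP ∪ preN)

/-- Executability of a non-sensing action in an a-state. -/
def NAct.execIn (a : NAct V) (σ : St V) : Prop := a.preP ⊆ σ.T ∧ a.preN ⊆ σ.F

/-- Executability of a sensing action in an a-state. -/
def SAct.execIn (a : SAct V) (σ : St V) : Prop := a.preP ⊆ σ.T ∧ a.preN ⊆ σ.F

/-- The result of executing a non-sensing action `a` in an a-state `σ`. -/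
def NAct.res (a : NAct V) (σ : St V) : St V :=
  ⟨σ.T \ a.del ∪ a.add, σ.F \ a.add ∪ a.del⟩

/-- The transition function `Φ` for a non-sensing action (`none` plays the role of `⊥`). -/
def PhiN (a : NAct V) (σ : St V) : Set (Option (St V)) :=
  {x | (a.execIn σ ∧ x = some (a.res σ)) ∨ (¬ a.execIn σ ∧ x = none)}

/-- The possible results of executing a sensing action `a` in an a-state `σ`. -/
def sres (a : SAct V) (σ : St V) : Set (St V) :=
  {σ' | σ'.OK ∧ σ.T ⊆ σ'.T ∧ σ.F ⊆ σ'.F ∧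
    (σ'.T \ σ.T) ∪ (σ'.F \ σ.F) = a.sens \ (σ.T ∪ σ.F)}

/-- The transition function `Φ` for a sensing action (`none` plays the role of `⊥`). -/
def PhiS (a : SAct V) (σ : St V) : Set (Option (St V)) :=
  {x | (a.execIn σ ∧ ∃ σ' ∈ sres a σ, x = some σ') ∨ (¬ a.execIn σ ∧ x = none)}

/-! ## Regression for single actions -/

/-- Applicability of a non-sensing action `a` in a p-state `δ`. -/
def AppN (a : NAct V) (δ : St V) : Prop :=
  ((a.add ∩ δ.T).Nonempty ∨ (a.del ∩ δ.F).Nonempty) ∧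
  Disjoint a.add δ.F ∧ Disjoint a.del δ.T ∧
  a.preP ∩ δ.F ⊆ a.del ∧ a.preN ∩ δ.T ⊆ a.add

/-- Regression of a non-sensing action over a p-state (`none` is `⊥`). -/
noncomputable def RegressN (a : NAct V) (δ : St V) : Option (St V) :=
  if AppN a δ then some ⟨δ.T \ a.add ∪ a.preP, δ.F \ a.del ∪ a.preN⟩ else none

/-- `X` is a sensed set of the set `Δ` of (distinct) p-states with respect to the sensing
action `a`, i.e. `X` is a nonempty subset of `Sens_a` and `Δ` is proper with respect to `X`. -/
def SensedSet (a : SAct V) (Δ : Finset (St V)) (X : Finset V) : Prop :=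
  X.Nonempty ∧ X ⊆ a.sens ∧
  (∀ δ ∈ Δ, a.sens ⊆ δ.T ∪ δ.F) ∧
  Δ.card = 2 ^ X.card ∧
  (∀ P Q : Finset V, Disjoint P Q → P ∪ Q = X →
    ∃! δ, δ ∈ Δ ∧ δ.T ∩ X = P ∧ δ.F ∩ X = Q) ∧
  (∀ δ ∈ Δ, ∀ δ' ∈ Δ, δ ≠ δ' → δ.T \ X = δ'.T \ X ∧ δ.F \ X = δ'.F \ X)

/-- Strong applicability of a sensing action in a set of p-states. -/
def StrongApp (a : SAct V) (Δ : Finset (St V)) : Prop :=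
  (∃ X, SensedSet a Δ X) ∧ ∀ δ ∈ Δ, Disjoint a.preP δ.F ∧ Disjoint a.preN δ.T

/-- Applicability of a sensing action in a set of p-states: some family of partial
extensions of the members of `Δ` makes `a` strongly applicable, and `Sens_a` is known
in every member of `Δ`. -/
def AppS (a : SAct V) (Δ : Finset (St V)) : Prop :=
  (∃ e : St V → St V, (∀ δ ∈ Δ, pext δ (e δ)) ∧ Set.InjOn e ↑Δ ∧ StrongApp a (Δ.image e)) ∧
  (∀ δ ∈ Δ, a.sens ⊆ δ.T ∪ δ.F)

/-- `S_{a,Δ}`: the sensed set of a family of partial extensions of `Δ`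
(well-defined by the "unique sensed set" lemma). -/
noncomputable def SaD (a : SAct V) (Δ : Finset (St V)) : Finset V :=
  if h : ∃ X, ∃ e : St V → St V, (∀ δ ∈ Δ, pext δ (e δ)) ∧ Set.InjOn e ↑Δ ∧
      SensedSet a (Δ.image e) X
  then h.choose else ∅

/-- Regression of a sensing action over a set of p-states (`none` is `⊥`). -/
noncomputable def RegressS (a : SAct V) (Δ : Finset (St V)) : Option (St V) :=
  if AppS a Δ then
    some ⟨(Δ.sup St.T) \ SaD a Δ ∪ a.preP, (Δ.sup St.F) \ SaD a Δ ∪ a.preN⟩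
  else none

/-! ## Formulas (conjunctions of fluent literals) -/

/-- A conjunction of fluent literals, given by its positive and negative fluents. -/
abbrev Form (V : Type*) := Finset V × Finset V

/-- A conjunction of literals is consistent if no fluent occurs both positively and
negatively. -/
def Consistent (φ : Form V) : Prop := Disjoint φ.1 φ.2

/-- Two conjunctions of literals are mutually exclusive. -/
def MutEx (φ ψ : Form V) : Prop := ¬ Disjoint φ.1 ψ.2 ∨ ¬ Disjoint ψ.1 φ.2

/-- A conjunction of literals holds in an a-state. -/
def holds (φ : Form V) (σ : St V) : Prop := φ.1 ⊆ σ.T ∧ φ.2 ⊆ σ.F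

/-- `BIN S`: all binary representations of the nonempty set of fluents `S`. -/
def BIN (S : Finset V) : Finset (Form V) :=
  S.powerset.image (fun P => (P, S \ P))

/-- The set of conjunctions `χ` spans over the set of fluents `S`. -/
def spans (χ : Finset (Form V)) (S : Finset V) : Prop :=
  ∃ φ : Form V, Consistent φ ∧ φ ∉ χ ∧ Disjoint S (φ.1 ∪ φ.2) ∧
    χ = (BIN S).image (fun ψ => (φ.1 ∪ ψ.1, φ.2 ∪ ψ.2))

/-! ## Conditional plans -/

/-- Conditional plans. -/
inductive Plan (V : Type*) where
  | empty : Plan V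
  | action : NAct V → Plan V
  | pcase : SAct V → List (Form V × Plan V) → Plan V
  | seq : Plan V → Plan V → Plan V

/-- Well-formedness of a conditional plan: in every case plan the guards are
consistent and pairwise mutually exclusive conjunctions of literals. -/
inductive Plan.WF : Plan V → Prop
  | empty : Plan.WF .empty
  | action (a : NAct V) : Plan.WF (.action a)
  | pcase (a : SAct V) (bs : List (Form V × Plan V)) :
      (∀ b ∈ bs, Consistent b.1) →
      bs.Pairwise (fun b b' => MutEx b.1 b'.1) →
      (∀ b ∈ bs, Plan.WF b.2) → Plan.WF (.pcase a bs)
  | seq {c₁ c₂ : Plan V} : Plan.WF c₁ → Plan.WF c₂ → Plan.WF (.seq c₁ c₂)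

/-- The graph of the extended transition function `Φ*`:
`PhiStarR c x y` means `y ∈ Φ*(c, x)` (where `none` is `⊥`). -/
inductive PhiStarR : Plan V → Option (St V) → Option (St V) → Prop
  | bot (c : Plan V) : PhiStarR c none none
  | empty (σ : St V) : PhiStarR .empty (some σ) (some σ)
  | action (a : NAct V) (σ : St V) (x : Option (St V)) :
      x ∈ PhiN a σ → PhiStarR (.action a) (some σ) x
  | caseBot (a : SAct V) (bs : List (Form V × Plan V)) (σ : St V) :
      none ∈ PhiS a σ → PhiStarR (.pcase a bs) (some σ) none
  | caseHit (a : SAct V) (bs : List (Form V × Plan V)) (σ σ' : St V)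
      (φ : Form V) (p : Plan V) (x : Option (St V)) :
      some σ' ∈ PhiS a σ → (φ, p) ∈ bs → holds φ σ' →
      PhiStarR p (some σ') x → PhiStarR (.pcase a bs) (some σ) x
  | caseMiss (a : SAct V) (bs : List (Form V × Plan V)) (σ σ' : St V) :
      some σ' ∈ PhiS a σ → (∀ b ∈ bs, ¬ holds b.1 σ') →
      PhiStarR (.pcase a bs) (some σ) none
  | seq (c₁ c₂ : Plan V) (σ : St V) (y x : Option (St V)) :
      PhiStarR c₁ (some σ) y → PhiStarR c₂ y x → PhiStarR (.seq c₁ c₂) (some σ) x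

/-- `R(cᵢ,δ)` from the definition of `Regress*` on case plans (the consistent case). -/
def Rform (φ : Form V) (st : St V) : St V := ⟨st.T ∪ φ.1, st.F ∪ φ.2⟩

/-- The graph of the extended regression function `Regress*`:
`RegStarR c x y` means `Regress*(c, x) = y` (where `none` is `⊥`). -/
inductive RegStarR : Plan V → Option (St V) → Option (St V) → Prop
  | bot (c : Plan V) : RegStarR c none none
  | empty (δ : St V) : RegStarR .empty (some δ) (some δ)
  | action (a : NAct V) (δ : St V) : RegStarR (.action a) (some δ) (RegressN a δ)
  | caseBot (a : SAct V) (bs : List (Form V × Plan V)) (δ : St V)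
      (b : Form V × Plan V) :
      b ∈ bs → RegStarR b.2 (some δ) none → RegStarR (.pcase a bs) (some δ) none
  | caseRBot (a : SAct V) (bs : List (Form V × Plan V)) (δ : St V)
      (b : Form V × Plan V) (st : St V) :
      b ∈ bs → RegStarR b.2 (some δ) (some st) →
      ¬ (Disjoint b.1.1 st.F ∧ Disjoint b.1.2 st.T) →
      RegStarR (.pcase a bs) (some δ) none
  | caseGo (a : SAct V) (bs : List (Form V × Plan V)) (δ : St V)
      (r : Form V × Plan V → St V) :
      (∀ b ∈ bs, RegStarR b.2 (some δ) (some (r b))) →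
      (∀ b ∈ bs, Disjoint b.1.1 (r b).F ∧ Disjoint b.1.2 (r b).T) →
      RegStarR (.pcase a bs) (some δ)
        (RegressS a ((bs.map (fun b => Rform b.1 (r b))).toFinset))
  | seq (c₁ c₂ : Plan V) (δ : St V) (y x : Option (St V)) :
      RegStarR c₂ (some δ) y → RegStarR c₁ y x → RegStarR (.seq c₁ c₂) (some δ) x

/-! ## Subplans, redundancy, regressability -/

/-- One editing step producing a "smaller" plan: removing an instance of a
non-sensing action, removing a case plan or one of its branches, or replacing a
sensing action by a sub sensing action; possibly deep inside the plan. -/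
inductive Edit : Plan V → Plan V → Prop
  | dropAct (a : NAct V) : Edit (.action a) .empty
  | dropCase (a : SAct V) (bs : List (Form V × Plan V)) : Edit (.pcase a bs) .empty
  | dropBranch (a : SAct V) (b : Form V × Plan V) (l₁ l₂ : List (Form V × Plan V)) :
      Edit (.pcase a (l₁ ++ b :: l₂)) (.pcase a (l₁ ++ l₂))
  | subSense (a a' : SAct V) (bs : List (Form V × Plan V)) :
      a'.preP = a.preP → a'.preN = a.preN → a'.sens ⊂ a.sens →
      Edit (.pcase a bs) (.pcase a' bs)
  | inBranch (a : SAct V) (φ : Form V) (p p' : Plan V) (l₁ l₂ : List (Form V × Plan V)) :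
      Edit p p' →
      Edit (.pcase a (l₁ ++ (φ, p) :: l₂)) (.pcase a (l₁ ++ (φ, p') :: l₂))
  | seqL {c₁ c₁' : Plan V} (c₂ : Plan V) : Edit c₁ c₁' → Edit (.seq c₁ c₂) (.seq c₁' c₂)
  | seqR {c₂ c₂' : Plan V} (c₁ : Plan V) : Edit c₂ c₂' → Edit (.seq c₁ c₂) (.seq c₁ c₂')

/-- `c'` is a subplan of `c`. -/
def IsSubplan (c' c : Plan V) : Prop := Relation.TransGen Edit c c'

/-- `⊥ ∉ Φ*(c,σ)` and `Φ*(c,σ) ⊆ ext(δ)`. -/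
def Achieves (c : Plan V) (σ δ : St V) : Prop :=
  ∀ x, PhiStarR c (some σ) x → ∃ σ' ∈ exts δ, x = some σ'

/-- `c` is redundant with respect to `(σ,δ)`. -/
def Redundant (c : Plan V) (σ δ : St V) : Prop :=
  Achieves c σ δ ∧ ∃ c', IsSubplan c' c ∧ Achieves c' σ δ

/-- A case plan `a;case(φ₁→c₁,…,φₙ→cₙ)` is possibly regressable. -/
def PRCase (a : SAct V) (bs : List (Form V × Plan V)) : Prop :=
  (∃ S : Finset V, S.Nonempty ∧ S ⊆ a.sens ∧ spans (bs.map Prod.fst).toFinset S) ∧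
  ∀ b ∈ bs, a.sens ⊆ b.1.1 ∪ b.1.2

/-- Every case plan occurring in `c` is possibly regressable. -/
inductive AllCasesPR : Plan V → Prop
  | empty : AllCasesPR .empty
  | action (a : NAct V) : AllCasesPR (.action a)
  | pcase (a : SAct V) (bs : List (Form V × Plan V)) :
      PRCase a bs → (∀ b ∈ bs, AllCasesPR b.2) → AllCasesPR (.pcase a bs)
  | seq {c₁ c₂ : Plan V} : AllCasesPR c₁ → AllCasesPR c₂ → AllCasesPR (.seq c₁ c₂)

/-- `c` is regressable with respect to `(σ,δ)`. -/
def Regressable (c : Plan V) (σ δ : St V) : Prop :=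
  AllCasesPR c ∧ Achieves c σ δ ∧ ¬ Redundant c σ δ

/-! ## Normalized plans -/

/-- Normalized conditional plans: a sequence of non-sensing actions followed by
either nothing or a case plan all of whose branches are normalized. -/
inductive Normalized : Plan V → Prop
  | empty : Normalized .empty
  | single (a : NAct V) : Normalized (.action a)
  | pcase (a : SAct V) (bs : List (Form V × Plan V)) :
      (∀ b ∈ bs, Normalized b.2) → Normalized (.pcase a bs)
  | cons (a : NAct V) {c : Plan V} : Normalized c → Normalized (.seq (.action a) c)

/-- `normSeq c k` normalizes the plan `c ; k`, assuming `k` is already normalized. -/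
def normSeq : Plan V → Plan V → Plan V
  | .empty, k => k
  | .action a, k => .seq (.action a) k
  | .pcase a bs, k => .pcase a (bs.attach.map (fun b => (b.1.1, normSeq b.1.2 k)))
  | .seq c₁ c₂, k => normSeq c₁ (normSeq c₂ k)
termination_by c _ => sizeOf c
decreasing_by
  all_goals simp_wf
  all_goals first
    | omega
    | (have h := List.sizeOf_lt_of_mem b.2
       obtain ⟨⟨f, p⟩, hb⟩ := b
       simp at *
       omega)

/-- `normalized(c)`. -/
def normalizePlan (c : Plan V) : Plan V := normSeq c .empty

/-! ## Sequences of non-sensing actions -/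

/-- The conditional plan `a₁;…;aₙ;k` determined by a list of non-sensing actions. -/
def seqP : List (NAct V) → Plan V → Plan V
  | [], k => k
  | a :: t, k => .seq (.action a) (seqP t k)

instance (a : NAct V) (σ : St V) : Decidable (a.execIn σ) :=
  inferInstanceAs (Decidable (a.preP ⊆ σ.T ∧ a.preN ⊆ σ.F))

/-- `Φ*` specialized to a sequence of non-sensing actions, as a function
(`none` is `⊥`). -/
def runSeq : List (NAct V) → St V → Option (St V)
  | [], σ => some σ
  | a :: t, σ => if a.execIn σ then runSeq t (a.res σ) else none

/-- `Regress*` specialized to a sequence of non-sensing actions, as a function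
(`none` is `⊥`). -/
noncomputable def regSeq : List (NAct V) → St V → Option (St V)
  | [], δ => some δ
  | a :: t, δ => match regSeq t δ with
      | none => none
      | some δ' => RegressN a δ'

/-- For a sequence of non-sensing actions: `⊥ ∉ Φ*(l,σ)` and `Φ*(l,σ) ⊆ ext(δ)`. -/
def SeqAchieves (l : List (NAct V)) (σ δ : St V) : Prop :=
  ∃ σ', runSeq l σ = some σ' ∧ σ' ∈ exts δ

/-- Redundancy of a sequence of non-sensing actions with respect to `(σ,δ)`
(a subplan of a sequence is a proper sublist of it). -/
def SeqRedundant (l : List (NAct V)) (σ δ : St V) : Prop :=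
  SeqAchieves l σ δ ∧ ∃ l', List.Sublist l' l ∧ l' ≠ l ∧ SeqAchieves l' σ δ

/-- Regressability of a sequence of non-sensing actions with respect to `(σ,δ)`. -/
def SeqRegressable (l : List (NAct V)) (σ δ : St V) : Prop :=
  SeqAchieves l σ δ ∧ ¬ SeqRedundant l σ δ

/-! ## The regression search algorithm -/

/-- The sets of plan-state pairs reachable by the algorithm `Solve(P)` from the
initial set `{⟨[], δ_G⟩}` using steps 4.1 (non-sensing regression) and 4.2
(sensing regression). -/
inductive Reach (δG : St V) : Set (Plan V × St V) → Prop
  | init : Reach δG {(Plan.empty, δG)}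
  | step1 {N : Set (Plan V × St V)} (c : Plan V) (δ : St V) (a : NAct V) (δ' : St V) :
      Reach δG N → (c, δ) ∈ N → RegressN a δ = some δ' →
      (∀ p ∈ N, p.2 ≠ δ') →
      Reach δG (insert (Plan.seq (.action a) c, δ') N)
  | step2 {N : Set (Plan V × St V)} (a : SAct V) (bs : List (Form V × Plan V))
      (ds : Form V × Plan V → St V) (S : Finset V) (δ' : St V) :
      Reach δG N →
      (∀ b ∈ bs, (b.2, ds b) ∈ N) →
      S.Nonempty → S ⊆ a.sens → spans (bs.map Prod.fst).toFinset S →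
      (∀ b ∈ bs, (Rform b.1 (ds b)).OK) →
      RegressS a ((bs.map (fun b => Rform b.1 (ds b))).toFinset) = some δ' →
      (∀ p ∈ N, p.2 ≠ δ') →
      Reach δG (insert (Plan.pcase a bs, δ') N)

/-- `N` is saturated: no step of type 4.1 or 4.2 can produce a p-state not
already occurring in `N`. -/
def Saturated (N : Set (Plan V × St V)) : Prop :=
  (∀ (c : Plan V) (δ : St V) (a : NAct V) (δ' : St V),
      (c, δ) ∈ N → RegressN a δ = some δ' → ∃ p ∈ N, p.2 = δ') ∧
  (∀ (a : SAct V) (bs : List (Form V × Plan V)) (ds : Form V × Plan V → St V)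
      (S : Finset V) (δ' : St V),
      (∀ b ∈ bs, (b.2, ds b) ∈ N) →
      S.Nonempty → S ⊆ a.sens → spans (bs.map Prod.fst).toFinset S →
      (∀ b ∈ bs, (Rform b.1 (ds b)).OK) →
      RegressS a ((bs.map (fun b => Rform b.1 (ds b))).toFinset) = some δ' →
      ∃ p ∈ N, p.2 = δ')

/-!
Let `τ` be the a-state reached by `l`, from which the last action `a` leads into `ext(δ)`.
Non-redundancy rules out `τ ∈ ext(δ)` (drop `a`), and this is condition (i) of applicability;
condition (ii) holds because the effects of `a` land in `ext(δ)` and `τ` is consistent. Moreover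
`τ ∈ ext(Regress(a,δ))`, and conversely every a-state in `ext(Regress(a,δ))` executes `a` into
`ext(δ)`. So a proper subplan `l'` of `l` reaching `ext(Regress(a,δ))` would make `l' ++ [a]` a
proper subplan of `l ++ [a]` reaching `ext(δ)`.
-/

/-- The p-state `Regress(a,δ)`, without the applicability test. -/
def regressState (a : NAct V) (δ : St V) : St V :=
  ⟨δ.T \ a.add ∪ a.preP, δ.F \ a.del ∪ a.preN⟩

lemma RegressN_eq_some_of_AppN {a : NAct V} {δ : St V} (h : AppN a δ) :
    RegressN a δ = some (regressState a δ) := by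
  rw [RegressN, if_pos h, regressState]

lemma NAct.res_OK (a : NAct V) {σ : St V} (h : σ.OK) : (a.res σ).OK := by
  have hadd_del := Finset.disjoint_left.mp a.hdisj
  rw [St.OK, Finset.disjoint_left] at *
  intro v hvT hvF
  simp only [NAct.res, Finset.mem_union, Finset.mem_sdiff] at hvT hvF
  tauto

lemma runSeq_append (l₁ l₂ : List (NAct V)) (σ : St V) :
    runSeq (l₁ ++ l₂) σ = (runSeq l₁ σ).bind (runSeq l₂) := by
  induction l₁ generalizing σ with
  | nil => rfl
  | cons a t ih =>
    simp only [List.cons_append, runSeq]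
    split_ifs
    exacts [ih _, rfl]

lemma runSeq_OK {l : List (NAct V)} {σ σ' : St V} (h : runSeq l σ = some σ') (hσ : σ.OK) :
    σ'.OK := by
  induction l generalizing σ with
  | nil => exact Option.some_injective _ h ▸ hσ
  | cons a t ih =>
    rw [runSeq] at h
    split_ifs at h
    exact ih h (a.res_OK hσ)

lemma seqAchieves_append_singleton {l : List (NAct V)} {a : NAct V} {σ δ : St V} :
    SeqAchieves (l ++ [a]) σ δ ↔
      ∃ τ, runSeq l σ = some τ ∧ a.execIn τ ∧ a.res τ ∈ exts δ := by
  simp only [SeqAchieves, runSeq_append]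
  constructor
  · rintro ⟨σ', hrun, hσ'⟩
    obtain ⟨τ, hτ, hstep⟩ := Option.bind_eq_some_iff.mp hrun
    simp only [runSeq] at hstep
    split_ifs at hstep with hexec
    exact ⟨τ, hτ, hexec, Option.some_injective _ hstep ▸ hσ'⟩
  · rintro ⟨τ, hτ, hexec, hres⟩
    exact ⟨a.res τ, by simp [hτ, runSeq, hexec], hres⟩

section OneStep

variable {a : NAct V} {δ τ : St V}

lemma mem_res_T {v : V} : v ∈ (a.res τ).T ↔ v ∈ τ.T ∧ v ∉ a.del ∨ v ∈ a.add := by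
  simp [NAct.res]

lemma mem_res_F {v : V} : v ∈ (a.res τ).F ↔ v ∈ τ.F ∧ v ∉ a.add ∨ v ∈ a.del := by
  simp [NAct.res]

lemma AppN_of_res_mem_exts (hτ : τ.OK) (hexec : a.execIn τ) (hres : a.res τ ∈ exts δ)
    (hnot : τ ∉ exts δ) : AppN a δ := by
  obtain ⟨-, hT, hF⟩ := hres
  have hadd_del := Finset.disjoint_left.mp a.hdisj
  have hτ' := Finset.disjoint_left.mp hτ
  have hT' : ∀ v ∈ δ.T, v ∈ τ.T ∧ v ∉ a.del ∨ v ∈ a.add := fun v hv => mem_res_T.mp (hT hv)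
  have hF' : ∀ v ∈ δ.F, v ∈ τ.F ∧ v ∉ a.add ∨ v ∈ a.del := fun v hv => mem_res_F.mp (hF hv)
  refine ⟨?_, ?_, ?_, ?_, ?_⟩
  · -- otherwise `a` touches no fluent of `δ`, so `τ` itself extends `δ`
    by_contra! hnone
    simp only [← Finset.disjoint_iff_inter_eq_empty, Finset.disjoint_left] at hnone
    refine hnot ⟨hτ, fun v hv => ?_, fun v hv => ?_⟩
    · exact (hT' v hv).resolve_right (hnone.1 · hv) |>.1
    · exact (hF' v hv).resolve_right (hnone.2 · hv) |>.1
  · exact Finset.disjoint_left.mpr fun v hva hv =>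
      (hF' v hv).elim (fun h => h.2 hva) (hadd_del hva)
  · exact Finset.disjoint_left.mpr fun v hvd hv =>
      (hT' v hv).elim (fun h => h.2 hvd) (hadd_del · hvd)
  · intro v hv
    obtain ⟨hpre, hv⟩ := Finset.mem_inter.mp hv
    exact (hF' v hv).resolve_left fun h => hτ' (hexec.1 hpre) h.1
  · intro v hv
    obtain ⟨hpre, hv⟩ := Finset.mem_inter.mp hv
    exact (hT' v hv).resolve_left fun h => hτ' h.1 (hexec.2 hpre)

lemma mem_exts_regressState (hτ : τ.OK) (hexec : a.execIn τ) (hres : a.res τ ∈ exts δ) :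
    τ ∈ exts (regressState a δ) := by
  obtain ⟨-, hT, hF⟩ := hres
  refine ⟨hτ, Finset.union_subset (fun v hv => ?_) hexec.1,
    Finset.union_subset (fun v hv => ?_) hexec.2⟩
  · obtain ⟨hv, hva⟩ := Finset.mem_sdiff.mp hv
    exact ((mem_res_T.mp (hT hv)).resolve_right hva).1
  · obtain ⟨hv, hvd⟩ := Finset.mem_sdiff.mp hv
    exact ((mem_res_F.mp (hF hv)).resolve_right hvd).1

lemma res_mem_exts_of_mem_exts_regressState (hdel : Disjoint a.del δ.T)
    (hadd : Disjoint a.add δ.F) (hτ : τ ∈ exts (regressState a δ)) :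
    a.execIn τ ∧ a.res τ ∈ exts δ := by
  obtain ⟨hτ, hT, hF⟩ := hτ
  refine ⟨⟨fun v hv => hT (by simp [regressState, hv]),
    fun v hv => hF (by simp [regressState, hv])⟩, a.res_OK hτ, fun v hv => ?_, fun v hv => ?_⟩
  · refine mem_res_T.mpr ((em (v ∈ a.add)).elim Or.inr fun hva => Or.inl ⟨?_, ?_⟩)
    · exact hT (by simp [regressState, hv, hva])
    · exact Finset.disjoint_right.mp hdel hv
  · refine mem_res_F.mpr ((em (v ∈ a.del)).elim Or.inr fun hvd => Or.inl ⟨?_, ?_⟩)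
    · exact hF (by simp [regressState, hv, hvd])
    · exact Finset.disjoint_right.mp hadd hv

end OneStep

theorem seq_regressable_last_step_general
    (σ δ : St V) (hσ : σ.OK)
    (l : List (NAct V)) (a : NAct V)
    (h : SeqRegressable (l ++ [a]) σ δ) :
    ∃ δs : St V, RegressN a δ = some δs ∧ SeqRegressable l σ δs := by
  obtain ⟨hach, hnred⟩ := h
  obtain ⟨τ, hrun, hexec, hres⟩ := seqAchieves_append_singleton.mp hach
  have hτ : τ.OK := runSeq_OK hrun hσ
  have hnot : τ ∉ exts δ := fun hτδ =>
    hnred ⟨hach, l, List.sublist_append_left l [a], by simp, τ, hrun, hτδ⟩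
  have happ : AppN a δ := AppN_of_res_mem_exts hτ hexec hres hnot
  refine ⟨regressState a δ, RegressN_eq_some_of_AppN happ,
    ⟨τ, hrun, mem_exts_regressState hτ hexec hres⟩, ?_⟩
  rintro ⟨-, l', hsub, hne, τ', hrun', hτ'⟩
  obtain ⟨hexec', hres'⟩ := res_mem_exts_of_mem_exts_regressState happ.2.2.1 happ.2.1 hτ'
  exact hnred ⟨hach, l' ++ [a], hsub.append_right [a],
    mt List.append_cancel_right hne,
    seqAchieves_append_singleton.mpr ⟨τ', hrun', hexec', hres'⟩⟩

/-- if the sequence `a₁;…;aₙ` (`n ≥ 1`) of non-sensing actions is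
regressable with respect to `(σ,δ)` then `Regress(aₙ,δ) = δ* ≠ ⊥` and
`a₁;…;aₙ₋₁` is regressable with respect to `(σ,δ*)`. -/
theorem seq_regressable_last_step
    (σ δ : St V) (hσ : σ.OK) (hδ : δ.OK)
    (l : List (NAct V)) (a : NAct V)
    (h : SeqRegressable (l ++ [a]) σ δ) :
    ∃ δs : St V, RegressN a δ = some δs ∧ SeqRegressable l σ δs :=
  seq_regressable_last_step_general σ δ hσ l a h
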